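/- Every totally transcendental complete first-order theory has an atomic model. -/

import Mathlib

open FirstOrder FirstOrder.Language

/-- A formula (in `n` free variables) is consistent with the theory `T` if it is realized by
some tuple in some model of `T`. -/
def ConsistentWith {L : FirstOrder.Language.{0,0}} (T : L.Theory) {n : ℕ} (φ : L.Formula (Fin n)) : Prop :=
  ∃ (M : Theory.ModelType.{0,0,0} T) (v : Fin n → M), φ.Realize v

/-- `φ` isolates a complete type in `T`: `T ∪ {∃x̄ φ}` is consistent, and for every formula `ψ`
in the same variables, either `T ⊢ φ → ψ` or `T ⊢ φ → ¬ψ` (semantically). -/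
def Isolates {L : FirstOrder.Language.{0,0}} (T : L.Theory) {n : ℕ} (φ : L.Formula (Fin n)) : Prop :=
  ConsistentWith T φ ∧
    ∀ ψ : L.Formula (Fin n),
      (∀ (M : Theory.ModelType.{0,0,0} T) (v : Fin n → M), φ.Realize v → ψ.Realize v) ∨
      (∀ (M : Theory.ModelType.{0,0,0} T) (v : Fin n → M), φ.Realize v → ¬ ψ.Realize v)

/-- The isolated types are dense in `T`: every formula consistent with `T` is implied, modulo
`T`, by a formula isolating a complete type. -/
def IsolatedTypesDense {L : FirstOrder.Language.{0,0}} (T : L.Theory) : Prop :=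
  ∀ (n : ℕ) (φ : L.Formula (Fin n)), ConsistentWith T φ →
    ∃ θ : L.Formula (Fin n), Isolates T θ ∧
      ∀ (M : Theory.ModelType.{0,0,0} T) (v : Fin n → M), θ.Realize v → φ.Realize v

/-- `M` is an atomic model of `T`: `M ⊨ T` and the type of every finite tuple from `M`
is isolated in `T`. -/
def IsAtomicModel {L : FirstOrder.Language.{0,0}} (T : L.Theory) (M : Type*) [L.Structure M] : Prop :=
  M ⊨ T ∧ ∀ (n : ℕ) (a : Fin n → M), ∃ φ : L.Formula (Fin n), φ.Realize a ∧ Isolates T φ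

/-- `T` is totally transcendental: there is no binary tree of formulas
`⟨φ_s(x̄, ȳ_s) : s ∈ 2^{<ω}⟩` with parameters `⟨ā_s⟩` in some model of `T` such that along each
branch `η ∈ 2^ω` the corresponding type is consistent (i.e., finitely satisfiable in the
model, the parameters lying in that model). -/
def TotallyTranscendental {L : FirstOrder.Language.{0,0}} (T : L.Theory) : Prop :=
  ¬ ∃ (k : ℕ) (M : Theory.ModelType.{0,0,0} T) (m : List Bool → ℕ)
      (φ : (s : List Bool) → L.Formula (Fin k ⊕ Fin (m s)))
      (a : (s : List Bool) → Fin (m s) → M),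
      ∀ (η : ℕ → Bool) (N : ℕ), ∃ x : Fin k → M, ∀ n, n < N →
        ((φ (List.ofFn fun i : Fin n => η i)).Realize
            (Sum.elim x (a (List.ofFn fun i : Fin n => η i))) ↔ η n = true)

/-!
Total transcendence makes the Boolean algebra of formulas over any parameter set atomic: a
nonzero element with no atom below it splits forever and yields the binary tree that the
definition forbids.

In a model `M` of `T`, Zorn's lemma gives a maximal set `A` all of whose finite tuples have
isolated types (the empty set qualifies because `T` is complete). If `b̄` realizes an atom
`χ(ā, ȳ)` of the `A`-definable sets and `θ` isolates the type of `ā`, then `θ(x̄) ∧ χ(x̄, ȳ)`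
isolates the type of `ā b̄`, so `A ∪ b̄` is again atomic and maximality puts `b̄` in `A`. Hence `A`
meets every nonempty `A`-definable set, and by Tarski–Vaught it is an elementary substructure:
an atomic model.
-/

theorem exists_binary_tree_of_not_isAtomic {B : Type*} [BooleanAlgebra B] (h : ¬IsAtomic B) :
    ∃ r : List Bool → B, ∀ (η : ℕ → Bool) (N : ℕ), ∃ c ≠ ⊥, ∀ n < N,
      c ≤ if η n then r (List.ofFn fun i : Fin n => η i)
        else (r (List.ofFn fun i : Fin n => η i))ᶜ := by
  obtain ⟨a, ha, hno⟩ : ∃ a : B, a ≠ ⊥ ∧ ∀ b, IsAtom b → ¬b ≤ a := by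
    simpa [isAtomic_iff] using h
  have hsplit : ∀ c, c ≠ ⊥ → c ≤ a → ∃ d < c, d ≠ ⊥ := fun c hc hca => by
    simpa [IsAtom, hc] using fun hat => hno c hat hca
  choose! r hrc hr using hsplit
  let step : B → Bool → B := fun c b => c ⊓ if b then r c else (r c)ᶜ
  have step_ne : ∀ (l : List Bool) c, c ≠ ⊥ → c ≤ a → l.foldl step c ≠ ⊥ := by
    intro l
    induction l with
    | nil => exact fun c hc _ => hc
    | cons b l ih =>
      intro c hc hca
      refine ih _ ?_ (inf_le_left.trans hca)
      cases b
      · simpa [step, ← sdiff_eq] using (hrc c hc hca).not_ge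
      · simpa [step, (hrc c hc hca).le] using hr c hc hca
  refine ⟨fun l => r (l.foldl step a), fun η N => ?_⟩
  let P : ℕ → B := fun n => (List.ofFn fun i : Fin n => η i).foldl step a
  have hP : ∀ n, P (n + 1) = step (P n) (η n) := fun n => by
    simp only [P, List.ofFn_succ' (fun i : Fin (n + 1) => η i), List.concat_eq_append,
      List.foldl_append, List.foldl_cons, List.foldl_nil, Fin.val_castSucc, Fin.val_last]
  refine ⟨P N, step_ne _ a ha le_rfl, fun n hn => ?_⟩
  calc P N ≤ P (n + 1) := antitone_nat_of_succ_le (fun n => (hP n).trans_le inf_le_left) hn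
    _ = step (P n) (η n) := hP n
    _ ≤ _ := inf_le_right

namespace Set

variable {L : FirstOrder.Language} {M : Type*} [L.Structure M] {A : Set M} {α : Type*}

theorem Definable.exists_formula_fin {s : Set (α → M)} (h : A.Definable L s) :
    ∃ (m : ℕ) (φ : L.Formula (α ⊕ Fin m)) (c : Fin m → M),
      range c ⊆ A ∧ s = {v | φ.Realize (Sum.elim v c)} := by
  obtain ⟨A₀, hA₀, h₀⟩ := definable_iff_finitely_definable.1 h
  obtain ⟨φ, rfl⟩ := definable_iff_exists_formula_sum.1 h₀
  let e := A₀.equivFin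
  refine ⟨A₀.card, φ.relabel (Sum.elim (Sum.inr ∘ e) Sum.inl), (↑) ∘ e.symm,
    fun _ ⟨i, hi⟩ => hi ▸ hA₀ (e.symm i).2, ?_⟩
  ext v
  simp only [mem_ofPred_eq, Formula.realize_relabel]
  congr! 1
  ext (a | a) <;> simp

theorem definable_setOf_realize_append {K k : ℕ} {F : Fin K → M} (hF : range F ⊆ A)
    (ψ : L.Formula (Fin (K + k))) : A.Definable L {y : Fin k → M | ψ.Realize (Fin.append F y)} := by
  refine definable_iff_exists_formula_sum.2
    ⟨ψ.relabel (Fin.addCases (fun j => Sum.inl ⟨F j, hF ⟨j, rfl⟩⟩) Sum.inr), ?_⟩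
  ext y
  simp only [mem_ofPred_eq, Formula.realize_relabel]
  congr! 1
  ext i
  induction i using Fin.addCases <;> simp

end Set

namespace FirstOrder.Language.DefinableSet

variable {L : FirstOrder.Language} {M : Type*} [L.Structure M] {A : Set M} {α : Type*}

theorem nonempty_iff_ne_bot {s : L.DefinableSet A α} : (s : Set (α → M)).Nonempty ↔ s ≠ ⊥ := by
  rw [Set.nonempty_iff_ne_empty, ← coe_bot (L := L) (A := A) (α := α), Ne, SetLike.coe_set_eq]

end FirstOrder.Language.DefinableSet

namespace FirstOrder.Language.Formula

variable {L : FirstOrder.Language} {α β : Type*} [Finite α] [Finite β]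

noncomputable def imageComp (θ : L.Formula β) (G : α → β) : L.Formula α :=
  (θ.relabel Sum.inr ⊓
    Formula.iInf fun i => (Term.var (Sum.inl i)).equal (Term.var (Sum.inr (G i)))).iExs β

@[simp]
theorem realize_imageComp {M : Type*} [L.Structure M] {θ : L.Formula β} {G : α → β}
    {v : α → M} : (θ.imageComp G).Realize v ↔ ∃ W : β → M, θ.Realize W ∧ v = W ∘ G := by
  simp [imageComp, funext_iff]

end FirstOrder.Language.Formula

open Set

section

variable {L : FirstOrder.Language.{0,0}} {T : L.Theory}

def HasIsolatedType (T : L.Theory) {M : Type*} [L.Structure M] {n : ℕ} (v : Fin n → M) : Prop :=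
  ∃ θ : L.Formula (Fin n), θ.Realize v ∧ Isolates T θ

theorem Isolates.imageComp {K n : ℕ} {θ : L.Formula (Fin K)} (hθ : Isolates T θ)
    (G : Fin n → Fin K) : Isolates T (θ.imageComp G) := by
  obtain ⟨⟨M, W, hW⟩, hθ⟩ := hθ
  refine ⟨⟨M, W ∘ G, Formula.realize_imageComp.2 ⟨W, hW, rfl⟩⟩, fun ψ => ?_⟩
  rcases hθ (ψ.relabel G) with h | h
  · refine .inl fun M' v hv => ?_
    obtain ⟨W', hW', rfl⟩ := Formula.realize_imageComp.1 hv
    simpa using h M' W' hW'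
  · refine .inr fun M' v hv => ?_
    obtain ⟨W', hW', rfl⟩ := Formula.realize_imageComp.1 hv
    simpa using h M' W' hW'

theorem HasIsolatedType.of_range_subset {M : Type*} [L.Structure M] {K n : ℕ} {v : Fin K → M}
    (hv : HasIsolatedType T v) {w : Fin n → M} (hw : range w ⊆ range v) :
    HasIsolatedType T w := by
  obtain ⟨θ, hθv, hθ⟩ := hv
  choose G hG using fun i => hw ⟨i, rfl⟩
  exact ⟨θ.imageComp G, Formula.realize_imageComp.2 ⟨v, hθv, funext fun i => (hG i).symm⟩,
    hθ.imageComp G⟩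

theorem hasIsolatedType_fin_zero (hT : T.IsComplete) {M : Type*} [L.Structure M]
    (v : Fin 0 → M) : HasIsolatedType T v := by
  refine ⟨⊤, Formula.realize_top.2 trivial, ⟨hT.1.some, finZeroElim, Formula.realize_top.2 trivial⟩,
    fun ψ => ?_⟩
  have realize_iff (M' : Theory.ModelType.{0,0,0} T) (V : Fin 0 → M') :
      ψ.Realize V ↔ M' ⊨ ψ.relabel finZeroElim := by
    rw [Sentence.Realize, Formula.realize_relabel, Subsingleton.elim V]
  refine (hT.2 (ψ.relabel finZeroElim)).imp (fun h M' V _ => ?_) (fun h M' V _ => ?_)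
  · exact (realize_iff M' V).2 (h.realize_sentence M')
  · exact (realize_iff M' V).not.2 ((Sentence.realize_not M').1 (h.realize_sentence M'))

theorem Isolates.realize_of_realize {n : ℕ} {θ σ : L.Formula (Fin n)} (hθ : Isolates T θ)
    {M : Theory.ModelType.{0,0,0} T} {v : Fin n → M} (hθv : θ.Realize v) (hσv : σ.Realize v)
    (M' : Theory.ModelType.{0,0,0} T) (V : Fin n → M') (hθV : θ.Realize V) : σ.Realize V :=
  (hθ.2 σ).resolve_right (fun h => h M v hθv hσv) M' V hθV

theorem HasIsolatedType.append {M : Theory.ModelType.{0,0,0} T} {K k : ℕ} {F : Fin K → M}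
    (hF : HasIsolatedType T F) {χ : L.Formula (Fin (K + k))} {x : Fin k → M}
    (hx : χ.Realize (Fin.append F x))
    (hχ : ∀ ψ : L.Formula (Fin (K + k)),
      (∀ y, χ.Realize (Fin.append F y) → ψ.Realize (Fin.append F y)) ∨
        ∀ y, χ.Realize (Fin.append F y) → ¬ψ.Realize (Fin.append F y)) :
    HasIsolatedType T (Fin.append F x) := by
  obtain ⟨θ, hθF, hθ⟩ := hF
  let allAppend (φ : L.Formula (Fin (K + k))) : L.Formula (Fin K) :=
    (φ.relabel finSumFinEquiv.symm).iAlls (Fin k)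
  have realize_allAppend {N : Type} [L.Structure N] (φ : L.Formula (Fin (K + k)))
      (W : Fin K → N) : (allAppend φ).Realize W ↔ ∀ y, φ.Realize (Fin.append W y) := by
    simp only [allAppend, Formula.realize_iAlls, Formula.realize_relabel]
    refine forall_congr' fun y => iff_of_eq (congrArg _ (funext fun i => ?_))
    induction i using Fin.addCases <;> simp
  let θ' := θ.relabel (Fin.castAdd k) ⊓ χ
  have hθ'x : θ'.Realize (Fin.append F x) := Formula.realize_inf.2
    ⟨by simpa [Function.comp_def] using hθF, hx⟩
  have implies (ψ : L.Formula (Fin (K + k)))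
      (h : ∀ y, χ.Realize (Fin.append F y) → ψ.Realize (Fin.append F y))
      (M' : Theory.ModelType.{0,0,0} T) (V : Fin (K + k) → M') (hV : θ'.Realize V) :
      ψ.Realize V := by
    obtain ⟨hθV, hχV⟩ := Formula.realize_inf.1 hV
    -- `∀ ȳ (χ → ψ)` holds of `F`, hence of every realization of the isolating formula `θ`.
    have := hθ.realize_of_realize hθF ((realize_allAppend (χ.imp ψ) F).2 h) M' _
      (by simpa using hθV)
    have hV : Fin.append (V ∘ Fin.castAdd k) (V ∘ Fin.natAdd K) = V := Fin.append_castAdd_natAdd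
    have := (realize_allAppend _ _).1 this (V ∘ Fin.natAdd K)
    rw [hV, Formula.realize_imp] at this
    exact this hχV
  refine ⟨θ', hθ'x, ⟨M, _, hθ'x⟩, fun ψ => (hχ ψ).imp (implies ψ) fun h M' V hV => ?_⟩
  simpa using implies ψ.not (by simpa using h) M' V hV

theorem TotallyTranscendental.isAtomic_definableSet (htt : TotallyTranscendental T)
    (M : Theory.ModelType.{0,0,0} T) (A : Set M) (k : ℕ) :
    IsAtomic (L.DefinableSet A (Fin k)) := by
  by_contra h
  obtain ⟨r, hr⟩ := exists_binary_tree_of_not_isAtomic h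
  choose m φ c _ hφ using fun l => (r l).2.exists_formula_fin
  refine htt ⟨k, M, m, φ, c, fun η N => ?_⟩
  obtain ⟨s, hs, hsr⟩ := hr η N
  obtain ⟨x, hx⟩ := DefinableSet.nonempty_iff_ne_bot.2 hs
  refine ⟨x, fun n hn => ?_⟩
  have hxn := hsr n hn hx
  rw [← mem_ofPred (p := fun v => (φ _).Realize (Sum.elim v (c _))), ← hφ]
  cases hb : η n <;> simp only [hb, if_true, Bool.false_eq_true, if_false,
    DefinableSet.mem_compl, iff_true, iff_false] at hxn ⊢ <;> exact hxn

def IsAtomicSet (T : L.Theory) {M : Type*} [L.Structure M] (A : Set M) : Prop :=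
  ∀ (n : ℕ) (v : Fin n → M), range v ⊆ A → HasIsolatedType T v

section IsAtomicSet

variable {M : Type*} [L.Structure M]

theorem isAtomicSet_empty (hT : T.IsComplete) : IsAtomicSet T (∅ : Set M) := by
  rintro (_ | n) v hv
  · exact hasIsolatedType_fin_zero hT v
  · exact absurd (hv ⟨0, rfl⟩) (notMem_empty _)

theorem isAtomicSet_sUnion {c : Set (Set M)} (hc : IsChain (· ⊆ ·) c) (hne : c.Nonempty)
    (h : ∀ A ∈ c, IsAtomicSet T A) : IsAtomicSet T (⋃₀ c) := fun n v hv => by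
  obtain ⟨A, hA, hvA⟩ :=
    hc.directedOn.exists_mem_subset_of_finite_of_subset_sUnion hne (finite_range v) hv
  exact h A hA n v hvA

theorem exists_maximal_isAtomicSet (hT : T.IsComplete) :
    ∃ A : Set M, Maximal (IsAtomicSet T) A := by
  obtain ⟨A, -, hA⟩ := zorn_subset_nonempty {A | IsAtomicSet T A}
    (fun c hcS hc hne => ⟨⋃₀ c, isAtomicSet_sUnion hc hne hcS, fun _ => subset_sUnion_of_mem⟩)
    ∅ (isAtomicSet_empty (M := M) hT)
  exact ⟨A, hA⟩

end IsAtomicSet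

theorem IsAtomicSet.union_range {M : Theory.ModelType.{0,0,0} T} {A : Set M}
    (hA : IsAtomicSet T A) {k : ℕ} {t : L.DefinableSet A (Fin k)} (ht : IsAtom t)
    {x : Fin k → M} (hx : x ∈ t) : IsAtomicSet T (A ∪ range x) := by
  obtain ⟨m, φ, c, hcA, htφ⟩ := t.2.exists_formula_fin
  intro n w hw
  obtain ⟨p, u, -, hu⟩ := ((finite_range w).inter_of_left A).fin_param
  let F := Fin.append c u
  have hFA : range F ⊆ A := by
    rintro _ ⟨i, rfl⟩
    induction i using Fin.addCases with
    | left i => simpa [F] using hcA ⟨i, rfl⟩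
    | right i => simpa [F] using (hu.le ⟨i, rfl⟩).2
  let χ : L.Formula (Fin (m + p + k)) :=
    φ.relabel (Sum.elim (Fin.natAdd _) fun i => Fin.castAdd k (Fin.castAdd p i))
  have mem_t (y : Fin k → M) : y ∈ t ↔ χ.Realize (Fin.append F y) := by
    change y ∈ t.1 ↔ _
    rw [htφ, mem_ofPred, Formula.realize_relabel]
    congr! 1
    ext (i | i) <;> simp [F]
  have hFx : HasIsolatedType T (Fin.append F x) := by
    refine (hA _ F hFA).append ((mem_t x).1 hx) fun ψ => ?_
    let s : L.DefinableSet A (Fin k) := ⟨_, definable_setOf_realize_append hFA ψ⟩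
    refine (em (t ≤ s)).imp (fun hts y hy => hts ((mem_t y).2 hy)) fun hts y hy hψ => ?_
    have := disjoint_iff.1 (ht.not_le_iff_disjoint.1 hts)
    exact DefinableSet.notMem_bot (this ▸ DefinableSet.mem_inf.2 ⟨(mem_t y).2 hy, hψ⟩)
  refine hFx.of_range_subset ?_
  rintro _ ⟨i, rfl⟩
  rcases hw ⟨i, rfl⟩ with hi | ⟨j, hj⟩
  · obtain ⟨j, hj⟩ : w i ∈ range u := hu ▸ ⟨⟨i, rfl⟩, hi⟩
    exact ⟨Fin.castAdd k (Fin.natAdd m j), by simp [F, hj]⟩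
  · exact ⟨Fin.natAdd _ j, by simp [hj]⟩

theorem meetsDefinable_of_maximal_isAtomicSet (htt : TotallyTranscendental T)
    {M : Theory.ModelType.{0,0,0} T} {A : Set M} (hA : Maximal (IsAtomicSet T) A) :
    L.MeetsDefinable A := by
  rintro D ⟨d, hd⟩ hD
  let s : L.DefinableSet A (Fin 1) := ⟨_, hD⟩
  obtain ⟨t, ht, hts⟩ := ((htt.isAtomic_definableSet M A 1).eq_bot_or_exists_atom_le s).resolve_left
    (DefinableSet.nonempty_iff_ne_bot.1 ⟨fun _ => d, hd⟩)
  obtain ⟨x, hx⟩ := DefinableSet.nonempty_iff_ne_bot.2 ht.1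
  have hxA := hA.2 (hA.1.union_range ht hx) subset_union_left
  exact ⟨x 0, hts hx, hxA (Or.inr ⟨0, rfl⟩)⟩

theorem FirstOrder.Language.MeetsDefinable.isAtomicModel {M : Theory.ModelType.{0,0,0} T}
    {A : Set M} (hA : L.MeetsDefinable A) (hat : IsAtomicSet T A) :
    IsAtomicModel T hA.toElementarySubstructure := by
  refine ⟨inferInstance, fun n a => ?_⟩
  obtain ⟨θ, hθ, hiso⟩ := hat n (Subtype.val ∘ a) <| by
    rintro _ ⟨i, rfl⟩
    exact hA.closure_eq_self.subset (a i).2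
  exact ⟨θ, (hA.toElementarySubstructure.subtype.map_formula θ a).1 hθ, hiso⟩

end

/-- every totally transcendental complete first-order theory has an atomic
model. -/
theorem statement9 {L : FirstOrder.Language.{0,0}} (T : L.Theory) (hT : T.IsComplete)
    (htt : TotallyTranscendental T) :
    ∃ (M : Type) (_ : L.Structure M), Nonempty M ∧ IsAtomicModel T M := by
  obtain ⟨M⟩ := hT.1
  obtain ⟨A, hA⟩ := exists_maximal_isAtomicSet (M := M) hT
  have hmeets := meetsDefinable_of_maximal_isAtomicSet htt hA
  exact ⟨hmeets.toElementarySubstructure, inferInstance, inferInstance,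
    hmeets.isAtomicModel hA.prop⟩
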